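/- On X = ℙ^2 × ℙ^1 with homogeneous coordinates [x_0:x_1:x_2], [y_0:y_1], the maps α = (x_0, x_1, y_0, y_1)^T : O → O(1,0)^{⊕2} ⊕ O(0,1)^{⊕2} and β = (y_0, y_1, -x_0, -x_1) : O(1,0)^{⊕2} ⊕ O(0,1)^{⊕2} → O(1,1) satisfy β∘α = 0, α is injective as a bundle map (nowhere vanishing), and β is surjective as a bundle map (nowhere vanishing), so they form a monad. -/

import Mathlib

section VecFour

variable {M : Type*} [Zero M]

theorem vecFour_ne_zero_of_left {a b : M} (c d : M) (h : a ≠ 0 ∨ b ≠ 0) : ![a, b, c, d] ≠ 0 := by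
  simp only [ne_eq, Matrix.cons_eq_zero_iff]
  tauto

theorem vecFour_ne_zero_of_right (a b : M) {c d : M} (h : c ≠ 0 ∨ d ≠ 0) : ![a, b, c, d] ≠ 0 := by
  simp only [ne_eq, Matrix.cons_eq_zero_iff]
  tauto

end VecFour

theorem sum_vecFour_cross_mul_eq_zero {R : Type*} [CommRing R] (a b c d : R) :
    ∑ i : Fin 4, ![c, d, -a, -b] i * ![a, b, c, d] i = 0 := by
  simp only [Fin.sum_univ_four, Matrix.cons_val]
  ring

theorem stmt9_general (x : Fin 3 → ℂ) (y : Fin 2 → ℂ) (hy : y ≠ 0) :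
    (∑ i : Fin 4, (![y 0, y 1, -x 0, -x 1] i) * (![x 0, x 1, y 0, y 1] i) = 0) ∧
    (![x 0, x 1, y 0, y 1] : Fin 4 → ℂ) ≠ 0 ∧
    (![y 0, y 1, -x 0, -x 1] : Fin 4 → ℂ) ≠ 0 := by
  have hy' : y 0 ≠ 0 ∨ y 1 ≠ 0 := Fin.exists_fin_two.mp (Function.ne_iff.mp hy)
  exact ⟨sum_vecFour_cross_mul_eq_zero _ _ _ _, vecFour_ne_zero_of_right _ _ hy',
    vecFour_ne_zero_of_left _ _ hy'⟩

theorem stmt9 (x : Fin 3 → ℂ) (y : Fin 2 → ℂ) (hx : x ≠ 0) (hy : y ≠ 0) :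
    (∑ i : Fin 4, (![y 0, y 1, -x 0, -x 1] i) * (![x 0, x 1, y 0, y 1] i) = 0) ∧
    (![x 0, x 1, y 0, y 1] : Fin 4 → ℂ) ≠ 0 ∧
    (![y 0, y 1, -x 0, -x 1] : Fin 4 → ℂ) ≠ 0 :=
  stmt9_general x y hy
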